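/- Let H be a reduced, commutative, cancellative, atomic monoid. Then c_adj(H) = sup{μ_adj(a) : a ∈ H, A_a(∼_{H,mon}) ≠ ∅}. -/

import Mathlib

namespace CMR

variable {α : Type*} [CancelCommMonoid α]

/-- The factorization monoid `Z(H)`: the free abelian monoid over the set of atoms of `H`,
modeled as multisets of atoms. -/
abbrev Fac (α : Type*) [CancelCommMonoid α] : Type _ := Multiset {u : α // Irreducible u}

/-- The factorization homomorphism `π : Z(H) → H`. -/
def piF (z : Fac α) : α := (z.map Subtype.val).prod

/-- `Z a`: the set of factorizations of `a`. -/
def Z (a : α) : Set (Fac α) := {z | piF z = a}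

/-- `L a`: the set of lengths of `a`. -/
def L (a : α) : Set ℕ := {n | ∃ z ∈ Z a, Multiset.card z = n}

/-- `Zk a k`: the factorizations of `a` of length `k`. -/
def Zk (a : α) (k : ℕ) : Set (Fac α) := {z ∈ Z a | Multiset.card z = k}

/-- `ZM a M`: the factorizations of `a` whose length lies in `M`. -/
def ZM (a : α) (M : Set ℕ) : Set (Fac α) := {z ∈ Z a | Multiset.card z ∈ M}

/-- The distance between two factorizations:
`d(z,z') = max (|z / gcd(z,z')|, |z' / gcd(z,z')|)`. -/
noncomputable def d (z z' : Fac α) : ℕ :=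
  letI := Classical.decEq {u : α // Irreducible u}
  max (Multiset.card (z - z')) (Multiset.card (z' - z))

/-- The distance between two sets of factorizations, the minimum of pairwise
distances (with the convention `sInf ∅ = 0`). -/
noncomputable def dS (X Y : Set (Fac α)) : ℕ :=
  sInf {n : ℕ | ∃ x ∈ X, ∃ y ∈ Y, d x y = n}

/-- `k` and `l` are adjacent lengths of `a` (with `k < l`):
`L(a) ∩ [k, l] = {k, l}`. -/
def Adjacent (a : α) (k l : ℕ) : Prop :=
  k ∈ L a ∧ l ∈ L a ∧ k < l ∧ ∀ m ∈ L a, k ≤ m → m ≤ l → m = k ∨ m = l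

/-- A chain of factorizations of `a` from `z` to `z'` whose consecutive members
satisfy the step predicate `P`. -/
def Chain (a : α) (P : Fac α → Fac α → Prop) (z z' : Fac α) : Prop :=
  ∃ (n : ℕ) (c : Fin (n + 1) → Fac α),
    c 0 = z ∧ c (Fin.last n) = z' ∧ (∀ i, c i ∈ Z a) ∧
    ∀ i : Fin n, P (c i.castSucc) (c i.succ)

/-- The catenary degree of an element: the smallest `N ∈ ℕ∞` such that any two
factorizations of `a` are connected by an `N`-chain. -/
noncomputable def cat (a : α) : ℕ∞ :=
  sInf {N : ℕ∞ | ∀ z ∈ Z a, ∀ z' ∈ Z a,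
    Chain a (fun x y => (d x y : ℕ∞) ≤ N) z z'}

/-- The equal catenary degree of an element: the smallest `N ∈ ℕ∞` such that any two
factorizations of `a` of the same length are connected by an equal-length `N`-chain. -/
noncomputable def ceq (a : α) : ℕ∞ :=
  sInf {N : ℕ∞ | ∀ z ∈ Z a, ∀ z' ∈ Z a, Multiset.card z = Multiset.card z' →
    Chain a (fun x y => (d x y : ℕ∞) ≤ N ∧ Multiset.card x = Multiset.card y) z z'}

/-- The monotone catenary degree of an element: the smallest `N ∈ ℕ∞` such that any two
factorizations of `a` (ordered by length) are connected by a monotone `N`-chain. -/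
noncomputable def cmon (a : α) : ℕ∞ :=
  sInf {N : ℕ∞ | ∀ z ∈ Z a, ∀ z' ∈ Z a, Multiset.card z ≤ Multiset.card z' →
    Chain a (fun x y => (d x y : ℕ∞) ≤ N ∧ Multiset.card x ≤ Multiset.card y) z z'}

/-- The adjacent catenary degree of an element:
`c_adj(a) = sup{d(Z_k(a), Z_l(a)) : k, l ∈ L(a) adjacent}`. -/
noncomputable def cadj (a : α) : ℕ∞ :=
  sSup {r : ℕ∞ | ∃ k l : ℕ, Adjacent a k l ∧ r = (dS (Zk a k) (Zk a l) : ℕ∞)}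

noncomputable def catH (α : Type*) [CancelCommMonoid α] : ℕ∞ := ⨆ a : α, cat a
noncomputable def ceqH (α : Type*) [CancelCommMonoid α] : ℕ∞ := ⨆ a : α, ceq a
noncomputable def cmonH (α : Type*) [CancelCommMonoid α] : ℕ∞ := ⨆ a : α, cmon a
noncomputable def cadjH (α : Type*) [CancelCommMonoid α] : ℕ∞ := ⨆ a : α, cadj a

/-- `gcd(x, y) ≠ 1`: the two factorizations share an atom. -/
def RStep (x y : Fac α) : Prop := ∃ u, u ∈ x ∧ u ∈ y

/-- `z ≈ z'`: there is an `R`-chain concatenating `z` and `z'` in `Z a`. -/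
def RRel (a : α) (z z' : Fac α) : Prop := Chain a RStep z z'

/-- `z ≈_eq z'`: there is an equal-length `R`-chain concatenating `z` and `z'` in `Z a`. -/
def RRelEq (a : α) (z z' : Fac α) : Prop :=
  Chain a (fun x y => RStep x y ∧ Multiset.card x = Multiset.card y) z z'

/-- There is a monotone `R`-chain from `z` to `z'` in `Z a`. -/
def MonRChain (a : α) (z z' : Fac α) : Prop :=
  Chain a (fun x y => RStep x y ∧ Multiset.card x ≤ Multiset.card y) z z'

/-- `μ(a)`: the supremum, over the `R`-classes `ρ` of `Z a`, of the minimal length of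
an element of `ρ`. -/
noncomputable def mu (a : α) : ℕ∞ :=
  sSup {r : ℕ∞ | ∃ z ∈ Z a,
    r = ((sInf {n : ℕ | ∃ z', RRel a z z' ∧ Multiset.card z' = n} : ℕ) : ℕ∞)}

noncomputable def muH (α : Type*) [CancelCommMonoid α] : ℕ∞ := ⨆ a : α, mu a

/-- `μ_eq(a) = sup{k ∈ L(a) : Z_k(a) has more than one ≈_eq-class}`. -/
noncomputable def mueq (a : α) : ℕ∞ :=
  sSup {r : ℕ∞ | ∃ k ∈ L a,
    (∃ z ∈ Zk a k, ∃ z' ∈ Zk a k, ¬ RRelEq a z z') ∧ r = (k : ℕ∞)}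

noncomputable def mueqH (α : Type*) [CancelCommMonoid α] : ℕ∞ := ⨆ a : α, mueq a

/-- `μ_adj(a) = sup{k ∈ L(a) : d(Z_k(a), Z_l(a)) = k for the l ∈ L(a), l < k adjacent to k}`. -/
noncomputable def muadj (a : α) : ℕ∞ :=
  sSup {r : ℕ∞ | ∃ k ∈ L a,
    (∃ l : ℕ, Adjacent a l k ∧ dS (Zk a k) (Zk a l) = k) ∧ r = (k : ℕ∞)}

noncomputable def muadjH (α : Type*) [CancelCommMonoid α] : ℕ∞ := ⨆ a : α, muadj a

/-- The monoid of relations of `H`, as a subset of `Z(H) × Z(H)`. -/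
def relMon (α : Type*) [CancelCommMonoid α] : Set (Fac α × Fac α) :=
  {p | piF p.1 = piF p.2}

/-- The monoid of equal-length relations of `H`. -/
def relMonEq (α : Type*) [CancelCommMonoid α] : Set (Fac α × Fac α) :=
  {p | piF p.1 = piF p.2 ∧ Multiset.card p.1 = Multiset.card p.2}

/-- The monoid of monotone relations of `H`. -/
def relMonMon (α : Type*) [CancelCommMonoid α] : Set (Fac α × Fac α) :=
  {p | piF p.1 = piF p.2 ∧ Multiset.card p.1 ≤ Multiset.card p.2}

/-- `p` is an atom (irreducible element) of the reduced submonoid `S` of `Z(H) × Z(H)`. -/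
def IsAtomIn (S : Set (Fac α × Fac α)) (p : Fac α × Fac α) : Prop :=
  p ∈ S ∧ p ≠ 0 ∧ ∀ q ∈ S, ∀ r ∈ S, p = q + r → q = 0 ∨ r = 0

/-- `A_a(S) = A(S) ∩ (Z(a) × Z(a))`. -/
def AtomsAt (S : Set (Fac α × Fac α)) (a : α) : Set (Fac α × Fac α) :=
  {p | IsAtomIn S p ∧ p.1 ∈ Z a ∧ p.2 ∈ Z a}

/-- The tame degree `t(a, x)`. -/
noncomputable def tdeg (a : α) (x : Fac α) : ℕ∞ :=
  sInf {N : ℕ∞ | ∀ z ∈ Z a, (∃ w ∈ Z a, x ≤ w) →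
    ∃ z' ∈ Z a, x ≤ z' ∧ (d z z' : ℕ∞) ≤ N}

/-- The tame degree `t(H) = sup{t(a, u) : a ∈ H, u ∈ A(H)}`. -/
noncomputable def tH (α : Type*) [CancelCommMonoid α] : ℕ∞ :=
  ⨆ (a : α) (u : {u : α // Irreducible u}), tdeg a {u}

/-- The `m`-adjacent catenary degree of an element:
`c_{ad,m}(a) = sup{d(Z_k(a), Z_{[k-m,k)}(a)) : k ∈ L(a)}`. -/
noncomputable def cadm (m : ℕ) (a : α) : ℕ∞ :=
  sSup {r : ℕ∞ | ∃ k ∈ L a, r = (dS (Zk a k) (ZM a (Set.Ico (k - m) k)) : ℕ∞)}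

noncomputable def cadmH (α : Type*) [CancelCommMonoid α] (m : ℕ) : ℕ∞ := ⨆ a : α, cadm m a

/-- `μ_{ad,m}(a) = sup{k ∈ L(a) : d(Z_k(a), Z_{[k-m,k)}(a)) = k}`. -/
noncomputable def muadm (m : ℕ) (a : α) : ℕ∞ :=
  sSup {r : ℕ∞ | ∃ k ∈ L a, dS (Zk a k) (ZM a (Set.Ico (k - m) k)) = k ∧ r = (k : ℕ∞)}

noncomputable def muadmH (α : Type*) [CancelCommMonoid α] (m : ℕ) : ℕ∞ := ⨆ a : α, muadm m a

/-- `H` is reduced: the only unit is `1`. -/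
def Reduced (α : Type*) [CancelCommMonoid α] : Prop := ∀ a : α, IsUnit a → a = 1

/-- `H` is atomic: every element is a product of atoms. -/
def Atomic (α : Type*) [CancelCommMonoid α] : Prop := ∀ a : α, ∃ z : Fac α, piF z = a

/-- The ascending chain condition on principal ideals. -/
def ACCP (α : Type*) [CancelCommMonoid α] : Prop :=
  ∀ f : ℕ → α, (∀ n, f (n + 1) ∣ f n) → ∃ N, ∀ n, N ≤ n → f N ∣ f n

/-!
Take adjacent lengths `k < l` of `a` and factorizations `x ∈ Z_k(a)`, `y ∈ Z_l(a)` at minimal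
distance `D = d(x, y)`. Cancelling their common part `g = gcd(x, y)` leaves a monotone relation
`(x', y')` with `|y'| = D`, and `b = π(y')` has adjacent lengths `|x'| < |y'|` at distance exactly
`|y'|`, since any closer pair for `b` would give, after adding `g` back, a closer pair for `a`.
The relation `(x', y')` is an atom of `∼_{H,mon}`: splitting it as `(p₁, q₁) + (p₂, q₂)`, the mixed
factorization `p₁ q₂ g` (or `q₁ p₂ g`) has a length in `[k, l]`, hence equal to `k` or `l`,
and is closer to `y` than `x` is unless one summand vanishes. So `d(Z_k(a), Z_l(a)) ≤ μ_adj(b)`;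
conversely `μ_adj(b)` is itself one of the distances defining `c_adj(b)`.
-/

lemma piF_add (x y : Fac α) : piF (x + y) = piF x * piF y := by
  simp [piF]

lemma d_eq_max_card_tsub [DecidableEq {u : α // Irreducible u}] (z z' : Fac α) :
    d z z' = max (Multiset.card (z - z')) (Multiset.card (z' - z)) := by
  unfold d
  congr <;> exact Subsingleton.elim _ _

lemma d_comm (z z' : Fac α) : d z z' = d z' z := by
  classical
  simp only [d_eq_max_card_tsub, max_comm]

lemma d_add_right (u v c : Fac α) : d (u + c) (v + c) = d u v := by
  classical
  simp only [d_eq_max_card_tsub, add_tsub_add_eq_tsub_right]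

lemma d_le_card_of_card_le {u v : Fac α} (h : Multiset.card u ≤ Multiset.card v) :
    d u v ≤ Multiset.card v := by
  classical
  rw [d_eq_max_card_tsub]
  exact max_le ((Multiset.card_le_card tsub_le_self).trans h)
    (Multiset.card_le_card tsub_le_self)

lemma d_eq_card_tsub_of_card_le [DecidableEq {u : α // Irreducible u}] {x y : Fac α}
    (h : Multiset.card x ≤ Multiset.card y) : d x y = Multiset.card (y - x) := by
  have hx := congrArg Multiset.card (Multiset.sub_add_inter x y)
  have hy := congrArg Multiset.card (Multiset.sub_add_inter y x)
  rw [Multiset.card_add] at hx hy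
  rw [Multiset.inter_comm] at hy
  rw [d_eq_max_card_tsub, max_eq_right (by omega)]

lemma dS_comm (X Y : Set (Fac α)) : dS X Y = dS Y X := by
  unfold dS
  congr 1
  ext n
  constructor
  · rintro ⟨x, hx, y, hy, rfl⟩; exact ⟨y, hy, x, hx, d_comm y x⟩
  · rintro ⟨y, hy, x, hx, rfl⟩; exact ⟨x, hx, y, hy, d_comm x y⟩

lemma dS_le_d {X Y : Set (Fac α)} {x y : Fac α} (hx : x ∈ X) (hy : y ∈ Y) : dS X Y ≤ d x y :=
  Nat.sInf_le ⟨x, hx, y, hy, rfl⟩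

lemma le_dS {X Y : Set (Fac α)} {n : ℕ} {x y : Fac α} (hx : x ∈ X) (hy : y ∈ Y)
    (h : ∀ x ∈ X, ∀ y ∈ Y, n ≤ d x y) : n ≤ dS X Y := by
  refine le_csInf ⟨d x y, x, hx, y, hy, rfl⟩ ?_
  rintro _ ⟨x', hx', y', hy', rfl⟩
  exact h x' hx' y' hy'

lemma exists_d_eq_dS {X Y : Set (Fac α)} {x y : Fac α} (hx : x ∈ X) (hy : y ∈ Y) :
    ∃ x ∈ X, ∃ y ∈ Y, d x y = dS X Y :=
  Nat.sInf_mem (s := {n | ∃ x ∈ X, ∃ y ∈ Y, d x y = n}) ⟨d x y, x, hx, y, hy, rfl⟩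

section MinimalPair

variable {a : α} {k l : ℕ} {p q g : Fac α}

lemma piF_eq_of_add_mem_Z (hp : p + g ∈ Z a) (hq : q + g ∈ Z a) : piF p = piF q := by
  have h : piF p * piF g = piF q * piF g := by rw [← piF_add, ← piF_add, hp, hq]
  exact mul_right_cancel h

lemma add_mem_Z_of_piF_eq {w : Fac α} (hw : piF w = piF q) (hq : q + g ∈ Z a) :
    w + g ∈ Z a := by
  change piF (w + g) = a
  rw [piF_add, hw, ← piF_add]
  exact hq

lemma Adjacent.of_add_right (hadj : Adjacent a k l) (hp : p + g ∈ Zk a k)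
    (hq : q + g ∈ Zk a l) :
    Adjacent (piF q) (Multiset.card p) (Multiset.card q) := by
  obtain ⟨-, -, hkl, hbetween⟩ := hadj
  obtain ⟨hpZ, hpk⟩ := hp
  obtain ⟨hqZ, hql⟩ := hq
  rw [Multiset.card_add] at hpk hql
  refine ⟨⟨p, piF_eq_of_add_mem_Z hpZ hqZ, rfl⟩, ⟨q, rfl, rfl⟩, by omega, ?_⟩
  rintro m ⟨w, hw, rfl⟩ hpw hwq
  have hwg : Multiset.card (w + g) ∈ L a := ⟨w + g, add_mem_Z_of_piF_eq hw hqZ, rfl⟩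
  rw [Multiset.card_add] at hwg
  rcases hbetween _ hwg (by omega) (by omega) with h | h <;> omega

lemma eq_zero_of_card_mixed_eq (hq : q + g ∈ Zk a l)
    (hmin : ∀ z ∈ Zk a k, ∀ z' ∈ Zk a l, Multiset.card q ≤ d z z')
    {p₁ q₁ p₂ q₂ : Fac α} (h₁ : (p₁, q₁) ∈ relMonMon α) (h₂ : (p₂, q₂) ∈ relMonMon α)
    (hq' : q = q₁ + q₂) (hk : Multiset.card (p₁ + q₂ + g) = k) :
    (p₂, q₂) = 0 := by
  obtain ⟨hpq₁, hc₁⟩ : piF p₁ = piF q₁ ∧ Multiset.card p₁ ≤ Multiset.card q₁ := h₁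
  have hc₂ : Multiset.card p₂ ≤ Multiset.card q₂ := h₂.2
  have hmixed : p₁ + q₂ + g ∈ Zk a k := by
    refine ⟨add_mem_Z_of_piF_eq ?_ hq.1, hk⟩
    rw [hq', piF_add, piF_add, hpq₁]
  have hdist : d (p₁ + q₂ + g) (q + g) = d p₁ q₁ := by
    rw [hq', add_right_comm p₁, add_right_comm q₁, d_add_right, d_add_right]
  have hle := hmin _ hmixed _ hq
  rw [hdist, hq', Multiset.card_add] at hle
  have hq₂ : Multiset.card q₂ = 0 := by
    have := d_le_card_of_card_le hc₁
    omega
  have hp₂ : p₂ = 0 := Multiset.card_eq_zero.1 (by omega)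
  rw [Multiset.card_eq_zero.1 hq₂, hp₂]
  rfl

lemma isAtomIn_relMonMon (hadj : Adjacent a k l) (hp : p + g ∈ Zk a k)
    (hq : q + g ∈ Zk a l) (hmin : ∀ z ∈ Zk a k, ∀ z' ∈ Zk a l, Multiset.card q ≤ d z z') :
    IsAtomIn (relMonMon α) (p, q) := by
  have hcard := (hadj.of_add_right hp hq).2.2.1
  refine ⟨⟨piF_eq_of_add_mem_Z hp.1 hq.1, hcard.le⟩, fun h => ?_, ?_⟩
  · rw [show q = 0 from congrArg Prod.snd h] at hcard
    exact Nat.not_lt_zero _ hcard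
  rintro ⟨p₁, q₁⟩ h₁ ⟨p₂, q₂⟩ h₂ hsplit
  simp only [Prod.mk_add_mk, Prod.mk.injEq] at hsplit
  obtain ⟨hp', hq'⟩ := hsplit
  have hmixed : p₁ + q₂ + g ∈ Z a :=
    add_mem_Z_of_piF_eq (by rw [hq', piF_add, piF_add, h₁.1]) hq.1
  have hlen : Multiset.card (p₁ + q₂ + g) ∈ L a := ⟨_, hmixed, rfl⟩
  have hk := hp.2
  have hl := hq.2
  have c₁ := h₁.2
  have c₂ := h₂.2
  simp only [hp', hq', Multiset.card_add] at hk hl hlen c₁ c₂ ⊢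
  rcases hadj.2.2.2 _ hlen (by omega) (by omega) with hlen_k | hlen_l
  · exact Or.inr (eq_zero_of_card_mixed_eq hq hmin h₁ h₂ hq' (by simpa using hlen_k))
  · refine Or.inl (eq_zero_of_card_mixed_eq hq hmin h₂ h₁ (hq'.trans (add_comm _ _)) ?_)
    simp only [Multiset.card_add]
    omega

lemma dS_Zk_eq_card (hadj : Adjacent a k l) (hp : p + g ∈ Zk a k) (hq : q + g ∈ Zk a l)
    (hmin : ∀ z ∈ Zk a k, ∀ z' ∈ Zk a l, Multiset.card q ≤ d z z') :
    dS (Zk (piF q) (Multiset.card q)) (Zk (piF q) (Multiset.card p)) = Multiset.card q := by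
  have hpZ : p ∈ Zk (piF q) (Multiset.card p) := ⟨piF_eq_of_add_mem_Z hp.1 hq.1, rfl⟩
  have hqZ : q ∈ Zk (piF q) (Multiset.card q) := ⟨rfl, rfl⟩
  refine le_antisymm ?_ (le_dS hqZ hpZ fun w hw w' hw' => ?_)
  · have hcard := (hadj.of_add_right hp hq).2.2.1
    exact (dS_le_d hqZ hpZ).trans (d_comm q p ▸ d_le_card_of_card_le hcard.le)
  · have hw'k : w' + g ∈ Zk a k := ⟨add_mem_Z_of_piF_eq hw'.1 hq.1, by
      rw [Multiset.card_add, hw'.2, ← Multiset.card_add]; exact hp.2⟩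
    have hwl : w + g ∈ Zk a l := ⟨add_mem_Z_of_piF_eq hw.1 hq.1, by
      rw [Multiset.card_add, hw.2, ← Multiset.card_add]; exact hq.2⟩
    simpa only [d_add_right, d_comm w'] using hmin _ hw'k _ hwl

end MinimalPair

lemma exists_atomsAt_relMonMon_dS_le_muadj {a : α} {k l : ℕ} (hadj : Adjacent a k l) :
    ∃ b : α, (AtomsAt (relMonMon α) b).Nonempty ∧ (dS (Zk a k) (Zk a l) : ℕ∞) ≤ muadj b := by
  classical
  obtain ⟨x₀, hx₀, hx₀k⟩ := hadj.1
  obtain ⟨y₀, hy₀, hy₀l⟩ := hadj.2.1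
  obtain ⟨x, hx, y, hy, hxy⟩ := exists_d_eq_dS (X := Zk a k) (Y := Zk a l) ⟨hx₀, hx₀k⟩ ⟨hy₀, hy₀l⟩
  have hx' : (x - y) + x ∩ y ∈ Zk a k := by rwa [Multiset.sub_add_inter]
  have hy' : (y - x) + x ∩ y ∈ Zk a l := by rwa [Multiset.inter_comm, Multiset.sub_add_inter]
  have hdxy : d x y = Multiset.card (y - x) :=
    d_eq_card_tsub_of_card_le (by rw [hx.2, hy.2]; exact hadj.2.2.1.le)
  have hmin : ∀ z ∈ Zk a k, ∀ z' ∈ Zk a l, Multiset.card (y - x) ≤ d z z' :=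
    fun z hz z' hz' => hdxy ▸ hxy ▸ dS_le_d hz hz'
  refine ⟨piF (y - x), ⟨(x - y, y - x), isAtomIn_relMonMon hadj hx' hy' hmin,
    piF_eq_of_add_mem_Z hx'.1 hy'.1, rfl⟩, ?_⟩
  rw [← hxy, hdxy]
  exact le_sSup ⟨_, ⟨y - x, rfl, rfl⟩,
    ⟨_, hadj.of_add_right hx' hy', dS_Zk_eq_card hadj hx' hy' hmin⟩, rfl⟩

lemma muadj_le_cadj (a : α) : muadj a ≤ cadj a := by
  refine sSup_le ?_
  rintro _ ⟨k, -, ⟨l, hadj, hdist⟩, rfl⟩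
  exact le_sSup ⟨l, k, hadj, by rw [dS_comm, hdist]⟩

theorem stmt7_general {α : Type*} [CancelCommMonoid α] :
    cadjH α = sSup {r : ℕ∞ | ∃ a : α, (AtomsAt (relMonMon α) a).Nonempty ∧ r = muadj a} := by
  refine le_antisymm (iSup_le fun a => sSup_le ?_) (sSup_le ?_)
  · rintro _ ⟨k, l, hadj, rfl⟩
    obtain ⟨b, hb, hle⟩ := exists_atomsAt_relMonMon_dS_le_muadj hadj
    exact hle.trans (le_sSup ⟨b, hb, rfl⟩)
  · rintro _ ⟨b, -, rfl⟩
    exact (muadj_le_cadj b).trans (le_iSup cadj b)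

/-- Let `H` be a reduced, commutative, cancellative, atomic monoid. Then
`c_adj(H) = sup{μ_adj(a) : a ∈ H, A_a(∼_{H,mon}) ≠ ∅}`. -/
theorem stmt7 {α : Type*} [CancelCommMonoid α]
    (hred : Reduced α) (hatomic : Atomic α) :
    cadjH α = sSup {r : ℕ∞ | ∃ a : α, (AtomsAt (relMonMon α) a).Nonempty ∧ r = muadj a} :=
  stmt7_general

end CMR
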